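/- arXiv:2502.18109 — 2 statements merged into one kernel-verified Lean document; each statement's English description precedes it below -/
import Mathlib

section
/- Let a, b ∈ 𝔹² be distinct points with 0 ∈ L[a,b] (the origin lies on the line through a and b), and let f : 𝔹² → 𝔹² be a holomorphic function. Then tanh(h(f(a), f(b))/4) ≤ tanh(ρ(a,b)/4), where h is the Hilbert metric and ρ is the hyperbolic metric of the unit disk. If moreover 0 ∈ L[f(a), f(b)], then tanh(ρ(f(a), f(b))/4) ≤ tanh(ρ(a,b)/4). -/
open Complex ComplexConjugate

/-- The line through two points `a`, `b` in the complex plane. -/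
noncomputable def lineThrough (a b : ℂ) : Set ℂ :=
  {z : ℂ | ∃ t : ℝ, z = a + (t : ℂ) * (b - a)}

/-- The Hilbert metric of the unit disk: for `a ≠ b`,
`h(a,b) = log (|u-b||a-v| / (|u-a||b-v|))` where `u, v` are the intersection
points of the line through `a, b` with the unit circle, ordered so that
`|u-a| < |u-b|` (equivalently `|v-b| < |v-a|`). For `a = b` the defining set
is empty and `sSup ∅ = 0`. -/
noncomputable def hilbertDist (a b : ℂ) : ℝ :=
  sSup { d : ℝ | ∃ u v : ℂ, ‖u‖ = 1 ∧ ‖v‖ = 1 ∧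
    u ∈ lineThrough a b ∧ v ∈ lineThrough a b ∧
    dist u a < dist u b ∧ dist v b < dist v a ∧
    d = Real.log ((dist u b * dist a v) / (dist u a * dist b v)) }

/-- The hyperbolic (Poincaré) metric of the unit disk, defined by
`sinh (ρ(a,b)/2) = |a-b| / √((1-|a|²)(1-|b|²))`. -/
noncomputable def rhoDist (a b : ℂ) : ℝ :=
  2 * Real.arsinh (‖a - b‖ /
    Real.sqrt ((1 - ‖a‖ ^ 2) * (1 - ‖b‖ ^ 2)))

/-- The visual angle metric of the unit disk:
`v(a,b) = sup {∠(a,z,b) : z ∈ ∂𝔹²}`. -/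
noncomputable def visualAngle (a b : ℂ) : ℝ :=
  sSup { α : ℝ | ∃ z : ℂ, ‖z‖ = 1 ∧ α = EuclideanGeometry.angle a z b }

/-- Euclidean distance from the origin to the line through `a` and `b`. -/
noncomputable def distToLine (a b : ℂ) : ℝ := Metric.infDist 0 (lineThrough a b)

/-- The Hilbert disk `B_h(z₀, t)`. -/
noncomputable def hilbertBall (z₀ : ℂ) (t : ℝ) : Set ℂ :=
  {z : ℂ | ‖z‖ < 1 ∧ hilbertDist z₀ z < t}

/-- The hyperbolic disk `B_ρ(z₀, t)`. -/
noncomputable def rhoBall (z₀ : ℂ) (t : ℝ) : Set ℂ :=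
  {z : ℂ | ‖z‖ < 1 ∧ rhoDist z₀ z < t}

/-!
By the Schwarz–Pick lemma `f` does not increase the pseudo-hyperbolic distance
`‖(a - z) / (1 - conj a * z)‖`, and `ρ` is an increasing function of it, so
`ρ(f a, f b) ≤ ρ(a, b)`. It remains to see `h ≤ ρ`. If the chord through `x ≠ y` meets the circle
in `u, v`, in the order `u, x, y, v`, write `α = |u - x|`, `γ = |x - y|`, `ε = |y - v|`. The power
of a point gives `1 - |x|² = α (γ + ε)` and `1 - |y|² = (α + γ) ε`, so with `P = (α + γ)(γ + ε)`
and `Q = α ε` we get `sinh (ρ/2) = γ / √(PQ)`, while `sinh (h/2) = (P - Q) / (2 √(PQ))` and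
`P - Q = γ (α + γ + ε)` with `α + γ + ε = |u - v| ≤ 2`. Finally `tanh` is increasing.
-/

open Metric Set

theorem Real.tanh_le_tanh {x y : ℝ} (h : x ≤ y) : Real.tanh x ≤ Real.tanh y := by
  rwa [← Real.artanh_le_artanh_iff ⟨Real.neg_one_lt_tanh x, Real.tanh_lt_one x⟩
    ⟨Real.neg_one_lt_tanh y, Real.tanh_lt_one y⟩, Real.artanh_tanh, Real.artanh_tanh]

theorem Real.log_div_eq_two_mul_arsinh {P Q : ℝ} (hP : 0 < P) (hQ : 0 < Q) :
    Real.log (P / Q) = 2 * Real.arsinh ((P - Q) / (2 * √(P * Q))) := by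
  have hs : 0 < √(P / Q) := Real.sqrt_pos.2 (div_pos hP hQ)
  have hsinh : Real.sinh (Real.log √(P / Q)) = (P - Q) / (2 * √(P * Q)) := by
    rw [Real.sinh_log hs, Real.sqrt_div hP.le, Real.sqrt_mul hP.le]
    have hP' := Real.sqrt_pos.2 hP
    have hQ' := Real.sqrt_pos.2 hQ
    field_simp
    rw [Real.sq_sqrt hP.le, Real.sq_sqrt hQ.le]
  rw [← hsinh, Real.arsinh_sinh, Real.log_sqrt (div_pos hP hQ).le]
  ring

theorem Real.log_crossRatio_le_two_mul_arsinh {a c e : ℝ} (ha : 0 < a) (hc : 0 ≤ c)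
    (he : 0 < e) (hsum : a + c + e ≤ 2) :
    Real.log ((a + c) * (c + e) / (a * e))
      ≤ 2 * Real.arsinh (c / √(a * (c + e) * ((a + c) * e))) := by
  rw [Real.log_div_eq_two_mul_arsinh (by positivity) (by positivity)]
  have hroot : 0 < √((a + c) * (c + e) * (a * e)) := by positivity
  have hPQ : (a + c) * (c + e) * (a * e) = a * (c + e) * ((a + c) * e) := by ring
  gcongr 2 * ?_
  rw [Real.arsinh_le_arsinh, ← hPQ, div_le_div_iff₀ (by positivity) hroot]
  nlinarith [mul_nonneg hc hroot.le]

/-- The involutive automorphism of the unit disk exchanging `a` and `0`; `‖moebius a z‖` is the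
pseudo-hyperbolic distance between `a` and `z`. -/
noncomputable def moebius (a z : ℂ) : ℂ := (a - z) / (1 - conj a * z)

theorem one_sub_conj_mul_ne_zero {a z : ℂ} (ha : ‖a‖ < 1) (hz : ‖z‖ < 1) :
    1 - conj a * z ≠ 0 := by
  intro h
  have h1 : ‖conj a * z‖ = 1 := by rw [← sub_eq_zero.1 h, norm_one]
  rw [norm_mul, Complex.norm_conj] at h1
  nlinarith [norm_nonneg a, norm_nonneg z]

theorem sq_norm_one_sub_conj_mul_sub_sq_norm_sub (a z : ℂ) :
    ‖1 - conj a * z‖ ^ 2 - ‖a - z‖ ^ 2 = (1 - ‖a‖ ^ 2) * (1 - ‖z‖ ^ 2) := by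
  simp only [Complex.sq_norm, Complex.normSq_apply, Complex.sub_re, Complex.sub_im,
    Complex.mul_re, Complex.mul_im, Complex.one_re, Complex.one_im, Complex.conj_re,
    Complex.conj_im]
  ring

theorem norm_moebius_lt_one {a z : ℂ} (ha : ‖a‖ < 1) (hz : ‖z‖ < 1) : ‖moebius a z‖ < 1 := by
  have hpos : 0 < ‖1 - conj a * z‖ := norm_pos_iff.2 (one_sub_conj_mul_ne_zero ha hz)
  have hsq : ‖a - z‖ ^ 2 < ‖1 - conj a * z‖ ^ 2 := by
    have hkey := sq_norm_one_sub_conj_mul_sub_sq_norm_sub a z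
    have hprod : 0 < (1 - ‖a‖ ^ 2) * (1 - ‖z‖ ^ 2) := by
      apply mul_pos <;> nlinarith [norm_nonneg a, norm_nonneg z]
    linarith
  rw [moebius, norm_div, div_lt_one hpos]
  exact lt_of_pow_lt_pow_left₀ 2 hpos.le hsq

theorem moebius_moebius {a z : ℂ} (ha : ‖a‖ < 1) (hz : ‖z‖ < 1) :
    moebius a (moebius a z) = z := by
  have hd := one_sub_conj_mul_ne_zero ha hz
  have hd' := one_sub_conj_mul_ne_zero ha (norm_moebius_lt_one ha hz)
  simp only [moebius] at hd' ⊢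
  rw [div_eq_iff hd']
  linear_combination -div_mul_cancel₀ (a - z) hd

theorem differentiableOn_moebius {a : ℂ} (ha : ‖a‖ < 1) :
    DifferentiableOn ℂ (moebius a) (ball 0 1) := fun _ hz =>
  ((differentiableAt_const a).sub differentiableAt_id).div
    ((differentiableAt_const 1).sub ((differentiableAt_const _).mul differentiableAt_id))
    (one_sub_conj_mul_ne_zero ha (mem_ball_zero_iff.1 hz)) |>.differentiableWithinAt

theorem mapsTo_moebius {a : ℂ} (ha : ‖a‖ < 1) : MapsTo (moebius a) (ball 0 1) (ball 0 1) :=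
  fun _ hz => mem_ball_zero_iff.2 (norm_moebius_lt_one ha (mem_ball_zero_iff.1 hz))

theorem norm_moebius_le_of_mapsTo_ball {f : ℂ → ℂ} (hf : DifferentiableOn ℂ f (ball 0 1))
    (hmaps : MapsTo f (ball 0 1) (ball 0 1)) {a b : ℂ} (ha : ‖a‖ < 1) (hb : ‖b‖ < 1) :
    ‖moebius (f a) (f b)‖ ≤ ‖moebius a b‖ := by
  have hfa : ‖f a‖ < 1 := mem_ball_zero_iff.1 (hmaps (mem_ball_zero_iff.2 ha))
  set g := moebius (f a) ∘ f ∘ moebius a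
  have hg : DifferentiableOn ℂ g (ball 0 1) :=
    (differentiableOn_moebius hfa).comp (hf.comp (differentiableOn_moebius ha) (mapsTo_moebius ha))
      (hmaps.comp (mapsTo_moebius ha))
  have hgmaps : MapsTo g (ball 0 1) (ball 0 1) :=
    (mapsTo_moebius hfa).comp (hmaps.comp (mapsTo_moebius ha))
  have hg0 : g 0 = 0 := by simp [g, moebius]
  have hgb : g (moebius a b) = moebius (f a) (f b) := by
    simp only [g, Function.comp_apply, moebius_moebius ha hb]
  have := Complex.norm_le_norm_of_mapsTo_ball hg (hgmaps.mono_right ball_subset_closedBall) hg0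
    (norm_moebius_lt_one ha hb)
  rwa [hgb] at this

theorem rhoDist_nonneg (x y : ℂ) : 0 ≤ rhoDist x y :=
  mul_nonneg zero_le_two (Real.arsinh_nonneg_iff.2 (by positivity))

theorem rhoDist_eq_of_moebius {x y : ℂ} (hx : ‖x‖ < 1) (hy : ‖y‖ < 1) :
    rhoDist x y = 2 * Real.arsinh (‖moebius x y‖ / √(1 - ‖moebius x y‖ ^ 2)) := by
  set N := ‖1 - conj x * y‖
  have hN : 0 < N := norm_pos_iff.2 (one_sub_conj_mul_ne_zero hx hy)
  have hnum : ‖x - y‖ = N * ‖moebius x y‖ := by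
    rw [moebius, norm_div, mul_div_cancel₀ _ hN.ne']
  have hden : (1 - ‖x‖ ^ 2) * (1 - ‖y‖ ^ 2) = N ^ 2 * (1 - ‖moebius x y‖ ^ 2) := by
    rw [← sq_norm_one_sub_conj_mul_sub_sq_norm_sub, hnum]
    ring
  rw [rhoDist, hnum, hden, Real.sqrt_mul (sq_nonneg N), Real.sqrt_sq hN.le,
    mul_div_mul_left _ _ hN.ne']

theorem rhoDist_le_of_mapsTo_ball {f : ℂ → ℂ} (hf : DifferentiableOn ℂ f (ball 0 1))
    (hmaps : MapsTo f (ball 0 1) (ball 0 1)) {a b : ℂ} (ha : ‖a‖ < 1) (hb : ‖b‖ < 1) :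
    rhoDist (f a) (f b) ≤ rhoDist a b := by
  have hfa : ‖f a‖ < 1 := mem_ball_zero_iff.1 (hmaps (mem_ball_zero_iff.2 ha))
  have hfb : ‖f b‖ < 1 := mem_ball_zero_iff.1 (hmaps (mem_ball_zero_iff.2 hb))
  have hpick := norm_moebius_le_of_mapsTo_ball hf hmaps ha hb
  rw [rhoDist_eq_of_moebius ha hb, rhoDist_eq_of_moebius hfa hfb]
  gcongr
  exact Real.sqrt_pos.2 (sub_pos.2 (pow_lt_one₀ (norm_nonneg _) (norm_moebius_lt_one ha hb)
    two_ne_zero))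

section Chord

variable {E : Type*} [NormedAddCommGroup E]

theorem Convex.wbtw_of_mem_affineSpan_pair [NormedSpace ℝ E] {s : Set E} (hs : Convex ℝ s)
    {u x y : E} (hx : x ∈ s) (hy : y ∈ s) (hu : u ∉ s) (hline : u ∈ line[ℝ, x, y])
    (hdist : dist u x < dist u y) : Wbtw ℝ u x y := by
  rcases (collinear_insert_of_mem_affineSpan_pair hline).wbtw_or_wbtw_or_wbtw with h | h | h
  · exact h
  · have := h.dist_add_dist
    rw [dist_comm y u, dist_comm x u] at this
    linarith [dist_nonneg (x := x) (y := y)]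
  · exact absurd (hs.segment_subset hy hx h.mem_segment) hu

theorem Wbtw.dist_mul_dist_eq_sq_sub_sq_norm [InnerProductSpace ℝ E] {r : ℝ} {u x v : E}
    (hu : ‖u‖ = r) (hv : ‖v‖ = r) (h : Wbtw ℝ u x v) :
    dist u x * dist x v = r ^ 2 - ‖x‖ ^ 2 := by
  have hxr : ‖x‖ ≤ r := mem_closedBall_zero_iff.1 <|
    (convex_closedBall 0 r).segment_subset (by simp [hu]) (by simp [hv]) h.mem_segment
  have hpow := EuclideanGeometry.mul_dist_eq_abs_sub_sq_dist (q := 0) h.mem_affineSpan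
    (by simp [hu, hv])
  rw [dist_comm v x, dist_zero_right, dist_zero_right, hv, abs_of_nonneg] at hpow
  · exact hpow
  · nlinarith [norm_nonneg x]

end Chord

theorem lineThrough_eq_affineSpan (a b : ℂ) : lineThrough a b = (line[ℝ, a, b] : Set ℂ) := by
  ext z
  simp only [lineThrough, SetLike.mem_coe, mem_affineSpan_pair_iff_exists_lineMap_eq,
    AffineMap.lineMap_apply_module', Complex.real_smul]
  exact exists_congr fun t => by rw [eq_comm, add_comm]

theorem log_crossRatio_le_rhoDist {u x y v : ℂ} (hu : ‖u‖ = 1) (hv : ‖v‖ = 1)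
    (hx : ‖x‖ < 1) (hy : ‖y‖ < 1) (huxy : Wbtw ℝ u x y) (hxyv : Wbtw ℝ x y v) (hne : x ≠ y) :
    Real.log (dist u y * dist x v / (dist u x * dist y v)) ≤ rhoDist x y := by
  have huxv : Wbtw ℝ u x v := huxy.trans_expand_left hxyv hne
  have hpx := huxv.dist_mul_dist_eq_sq_sub_sq_norm hu hv
  have hpy := (huxy.trans_expand_right hxyv hne).dist_mul_dist_eq_sq_sub_sq_norm hu hv
  have hchord : dist u v ≤ 2 := by
    simpa [hu, hv, one_add_one_eq_two] using dist_le_norm_add_norm u v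
  have hux : 0 < dist u x := dist_pos.2 (by rintro rfl; linarith)
  have hyv : 0 < dist y v := dist_pos.2 (by rintro rfl; linarith)
  rw [one_pow] at hpx hpy
  rw [huxv.dist_add_dist.symm, hxyv.dist_add_dist.symm] at hchord
  rw [rhoDist, ← dist_eq_norm, ← hpx, ← hpy, huxy.dist_add_dist.symm, hxyv.dist_add_dist.symm]
  exact Real.log_crossRatio_le_two_mul_arsinh hux dist_nonneg hyv (by linarith)

theorem hilbertDist_le_rhoDist {x y : ℂ} (hx : ‖x‖ < 1) (hy : ‖y‖ < 1) :
    hilbertDist x y ≤ rhoDist x y := by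
  refine Real.sSup_le ?_ (rhoDist_nonneg x y)
  rintro _ ⟨u, v, hu, hv, hul, hvl, hux, hvy, rfl⟩
  have hne : x ≠ y := by rintro rfl; exact lt_irrefl _ hux
  have hxb : x ∈ ball (0 : ℂ) 1 := mem_ball_zero_iff.2 hx
  have hyb : y ∈ ball (0 : ℂ) 1 := mem_ball_zero_iff.2 hy
  have hout : ∀ {w : ℂ}, ‖w‖ = 1 → w ∉ ball (0 : ℂ) 1 := fun hw hb =>
    (mem_ball_zero_iff.1 hb).ne hw
  rw [lineThrough_eq_affineSpan] at hul hvl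
  rw [Set.pair_comm] at hvl
  have huxy := (convex_ball 0 1).wbtw_of_mem_affineSpan_pair hxb hyb (hout hu) hul hux
  have hvyx := (convex_ball 0 1).wbtw_of_mem_affineSpan_pair hyb hxb (hout hv) hvl hvy
  exact log_crossRatio_le_rhoDist hu hv hx hy huxy hvyx.symm hne

theorem distortion_through_origin_general (a b : ℂ)
    (ha : ‖a‖ < 1) (hb : ‖b‖ < 1)
    (f : ℂ → ℂ) (hf : DifferentiableOn ℂ f (Metric.ball 0 1))
    (hmaps : Set.MapsTo f (Metric.ball 0 1) (Metric.ball 0 1)) :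
    Real.tanh (hilbertDist (f a) (f b) / 4) ≤ Real.tanh (rhoDist a b / 4) ∧
    ((0 : ℂ) ∈ lineThrough (f a) (f b) →
      Real.tanh (rhoDist (f a) (f b) / 4) ≤ Real.tanh (rhoDist a b / 4)) := by
  have hfa : ‖f a‖ < 1 := mem_ball_zero_iff.1 (hmaps (mem_ball_zero_iff.2 ha))
  have hfb : ‖f b‖ < 1 := mem_ball_zero_iff.1 (hmaps (mem_ball_zero_iff.2 hb))
  have hrho : rhoDist (f a) (f b) ≤ rhoDist a b := rhoDist_le_of_mapsTo_ball hf hmaps ha hb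
  have hhilbert : hilbertDist (f a) (f b) ≤ rhoDist (f a) (f b) := hilbertDist_le_rhoDist hfa hfb
  exact ⟨Real.tanh_le_tanh (by linarith), fun _ => Real.tanh_le_tanh (by linarith)⟩

/-- Corollary of the distortion theorem for a holomorphic self-map `f` of the
unit disk: if `0 ∈ L[a,b]` then `tanh (h(f a, f b)/4) ≤ tanh (ρ(a,b)/4)`; if
moreover `0 ∈ L[f a, f b]` then `tanh (ρ(f a, f b)/4) ≤ tanh (ρ(a,b)/4)`. -/
theorem distortion_through_origin (a b : ℂ)
    (ha : ‖a‖ < 1) (hb : ‖b‖ < 1) (hab : a ≠ b)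
    (h0 : (0 : ℂ) ∈ lineThrough a b)
    (f : ℂ → ℂ) (hf : DifferentiableOn ℂ f (Metric.ball 0 1))
    (hmaps : Set.MapsTo f (Metric.ball 0 1) (Metric.ball 0 1)) :
    Real.tanh (hilbertDist (f a) (f b) / 4) ≤ Real.tanh (rhoDist a b / 4) ∧
    ((0 : ℂ) ∈ lineThrough (f a) (f b) →
      Real.tanh (rhoDist (f a) (f b) / 4) ≤ Real.tanh (rhoDist a b / 4)) :=
  distortion_through_origin_general a b ha hb f hf hmaps
end

section
/- Let a, b ∈ 𝔹² be distinct points, let u, v be the two intersection points of the line L[a,b] with the unit circle ordered so that |u−a| < |u−b|, and let H = exp(h(a,b)) where h is the Hilbert metric of the unit disk. Then H satisfies the quadratic equation (1−|a|²)(1−|b|²)H² − ((1 − a·conj(b))² + (1 − conj(a)·b)² + 2|a−b|²)·H + (1−|a|²)(1−|b|²) = 0, and H is the larger of the two roots of this equation (the two roots being reciprocals of each other). -/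
open Complex ComplexConjugate

open AffineMap

/-! Parametrize the line through `a` and `b` as `s ↦ lineMap a b s`. Then `‖lineMap a b s‖² - 1`
is a real quadratic in `s` with leading coefficient `‖b - a‖²`, negative at `s = 0` and `s = 1`, so
it factors as `‖b - a‖² (s - t) (s - t')` with `t < 0 < 1 < t'`, the parameters of `u` and `v`.
The Hilbert distance is then `log (X / Y)` with `X = (1 - t) t'` and `Y = -t (t' - 1)`. Evaluating
the factorization at `s = 0, 1` gives `1 - ‖a‖² = -‖b - a‖² t t'` and
`1 - ‖b‖² = -‖b - a‖² (1 - t) (1 - t')`, and the middle coefficient of the quadratic depends only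
on `‖a‖, ‖b‖, ‖a - b‖`. Up to the factor `‖b - a‖⁴` the quadratic becomes
`X Y H² - (X² + Y²) H + X Y = (X H - Y) (Y H - X)`, with roots `X / Y` and `Y / X`. -/

lemma exists_quadratic_eq_mul_sub_mul_sub {α β γ : ℝ} (hα : 0 < α) (hγ : γ < 0) :
    ∃ t t' : ℝ, t < 0 ∧ 0 < t' ∧ ∀ s, α * s ^ 2 + β * s + γ = α * ((s - t) * (s - t')) := by
  set d := √(β ^ 2 - 4 * α * γ)
  have hd : d ^ 2 = β ^ 2 - 4 * α * γ := Real.sq_sqrt (by nlinarith [sq_nonneg β])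
  have hd0 : 0 ≤ d := Real.sqrt_nonneg _
  refine ⟨(-β - d) / (2 * α), (-β + d) / (2 * α), ?_, ?_, fun s => ?_⟩
  · exact div_neg_of_neg_of_pos (by nlinarith) (by positivity)
  · exact div_pos (by nlinarith) (by positivity)
  · have hexp : α * ((s - (-β - d) / (2 * α)) * (s - (-β + d) / (2 * α))) =
        α * s ^ 2 + β * s + (β ^ 2 - d ^ 2) / (4 * α) := by
      field_simp
      ring
    rw [hexp, hd]
    field_simp
    ring

section InnerProductSpace

variable {E : Type*} [NormedAddCommGroup E] [InnerProductSpace ℝ E] {a b : E}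

lemma norm_lineMap_sq (a b : E) (s : ℝ) :
    ‖lineMap a b s‖ ^ 2 = ‖b - a‖ ^ 2 * s ^ 2 + 2 * inner ℝ a (b - a) * s + ‖a‖ ^ 2 := by
  rw [lineMap_apply_module', add_comm, norm_add_sq_real, inner_smul_right, norm_smul, mul_pow,
    Real.norm_eq_abs, sq_abs]
  ring

lemma exists_norm_lineMap_sq_sub_one_eq (ha : ‖a‖ < 1) (hb : ‖b‖ < 1) (hab : a ≠ b) :
    ∃ t t' : ℝ, t < 0 ∧ 1 < t' ∧
      ∀ s, ‖lineMap a b s‖ ^ 2 - 1 = ‖b - a‖ ^ 2 * ((s - t) * (s - t')) := by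
  have hq : 0 < ‖b - a‖ ^ 2 := by
    have := sub_ne_zero.2 hab.symm
    positivity
  obtain ⟨t, t', ht, ht', hf⟩ := exists_quadratic_eq_mul_sub_mul_sub (β := 2 * inner ℝ a (b - a))
    hq (show ‖a‖ ^ 2 - 1 < 0 by nlinarith [norm_nonneg a])
  have hf' : ∀ s, ‖lineMap a b s‖ ^ 2 - 1 = ‖b - a‖ ^ 2 * ((s - t) * (s - t')) := fun s => by
    rw [norm_lineMap_sq, ← hf]; ring
  refine ⟨t, t', ht, ?_, hf'⟩
  have h1 := hf' 1
  rw [lineMap_apply_one] at h1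
  nlinarith [norm_nonneg b, mul_pos hq (by linarith : (0 : ℝ) < 1 - t)]

lemma norm_lineMap_eq_one_iff {t t' : ℝ} (hab : a ≠ b)
    (hf : ∀ s, ‖lineMap a b s‖ ^ 2 - 1 = ‖b - a‖ ^ 2 * ((s - t) * (s - t'))) (s : ℝ) :
    ‖lineMap a b s‖ = 1 ↔ s = t ∨ s = t' := by
  rw [← pow_eq_one_iff_of_nonneg (norm_nonneg _) two_ne_zero, ← sub_eq_zero, hf]
  simp [sub_eq_zero, hab.symm]

end InnerProductSpace

section NormedSpace

variable {F : Type*} [NormedAddCommGroup F] [NormedSpace ℝ F] {a b : F}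

lemma dist_lineMap_left_lt_dist_lineMap_right_iff (hab : a ≠ b) (s : ℝ) :
    dist (lineMap a b s) a < dist (lineMap a b s) b ↔ s < 2⁻¹ := by
  rw [dist_lineMap_left, dist_lineMap_right, mul_lt_mul_iff_left₀ (dist_pos.2 hab),
    Real.norm_eq_abs, Real.norm_eq_abs, ← sq_lt_sq]
  constructor <;> intro h <;> nlinarith

lemma dist_lineMap_right_lt_dist_lineMap_left_iff (hab : a ≠ b) (s : ℝ) :
    dist (lineMap a b s) b < dist (lineMap a b s) a ↔ 2⁻¹ < s := by
  rw [← lineMap_apply_one_sub b a s, dist_lineMap_left_lt_dist_lineMap_right_iff hab.symm]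
  constructor <;> intro h <;> linarith

lemma dist_lineMap_mul_dist_div_dist_lineMap_mul_dist (hab : a ≠ b) (t t' : ℝ) :
    dist (lineMap a b t) b * dist a (lineMap a b t') /
        (dist (lineMap a b t) a * dist b (lineMap a b t')) =
      |1 - t| * |t'| / (|t| * |1 - t'|) := by
  have hd : dist a b * dist a b ≠ 0 := by positivity [dist_pos.2 hab]
  rw [dist_lineMap_left, dist_lineMap_right, dist_comm a (lineMap a b t'), dist_lineMap_left,
    dist_comm b (lineMap a b t'), dist_lineMap_right, mul_mul_mul_comm, mul_mul_mul_comm ‖t‖,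
    mul_div_mul_right _ _ hd]
  simp only [Real.norm_eq_abs]

end NormedSpace

lemma lineThrough_eq_range (a b : ℂ) : lineThrough a b = Set.range (lineMap a b : ℝ → ℂ) := by
  ext z
  simp [lineThrough, lineMap_apply_module', Complex.real_smul, eq_comm, add_comm]

lemma hilbertDist_eq_log {a b : ℂ} (hab : a ≠ b) {t t' : ℝ} (ht : t < 0) (ht' : 1 < t')
    (hf : ∀ s, ‖lineMap a b s‖ ^ 2 - 1 = ‖b - a‖ ^ 2 * ((s - t) * (s - t'))) :
    hilbertDist a b = Real.log ((1 - t) * t' / (-t * (t' - 1))) := by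
  have hratio := dist_lineMap_mul_dist_div_dist_lineMap_mul_dist hab t t'
  rw [abs_of_pos (by linarith : 0 < 1 - t), abs_of_pos (by linarith : 0 < t'), abs_of_neg ht,
    abs_of_neg (by linarith : 1 - t' < 0), neg_sub] at hratio
  have hsphere := norm_lineMap_eq_one_iff hab hf
  rw [hilbertDist, ← csSup_singleton (Real.log _)]
  congr 1
  ext d
  simp only [lineThrough_eq_range, Set.mem_ofPred_eq, Set.mem_singleton_iff]
  constructor
  · rintro ⟨_, _, hu, hv, ⟨s, rfl⟩, ⟨s', rfl⟩, hua, hvb, rfl⟩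
    rw [dist_lineMap_left_lt_dist_lineMap_right_iff hab] at hua
    rw [dist_lineMap_right_lt_dist_lineMap_left_iff hab] at hvb
    obtain rfl : s = t := ((hsphere s).1 hu).resolve_right (by linarith)
    obtain rfl : s' = t' := ((hsphere s').1 hv).resolve_left (by linarith)
    rw [hratio]
  · rintro rfl
    refine ⟨_, _, (hsphere t).2 (.inl rfl), (hsphere t').2 (.inr rfl), ⟨t, rfl⟩, ⟨t', rfl⟩,
      ?_, ?_, by rw [hratio]⟩
    · rw [dist_lineMap_left_lt_dist_lineMap_right_iff hab]; linarith
    · rw [dist_lineMap_right_lt_dist_lineMap_left_iff hab]; linarith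

lemma re_one_sub_mul_conj_sq_add_sq_add_two_norm_sub_sq (a b : ℂ) :
    ((1 - a * conj b) ^ 2 + (1 - conj a * b) ^ 2).re + 2 * ‖a - b‖ ^ 2 =
      (2 - ‖a‖ ^ 2 - ‖b‖ ^ 2 + ‖a - b‖ ^ 2) ^ 2 - 2 * ((1 - ‖a‖ ^ 2) * (1 - ‖b‖ ^ 2)) := by
  rw [Complex.sq_norm, Complex.sq_norm, Complex.sq_norm]
  simp only [Complex.normSq_apply, sq, Complex.add_re, Complex.sub_re,
    Complex.sub_im, Complex.mul_re, Complex.mul_im, Complex.one_re, Complex.one_im,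
    Complex.conj_re, Complex.conj_im]
  ring

lemma reciprocal_quadratic_roots {K X Y : ℝ} (hK : K ≠ 0) (hY : 0 < Y) (hYX : Y ≤ X) :
    K * (X * Y) * (X / Y) ^ 2 - K * (X ^ 2 + Y ^ 2) * (X / Y) + K * (X * Y) = 0 ∧
    K * (X * Y) * (X / Y)⁻¹ ^ 2 - K * (X ^ 2 + Y ^ 2) * (X / Y)⁻¹ + K * (X * Y) = 0 ∧
    ∀ x : ℝ, K * (X * Y) * x ^ 2 - K * (X ^ 2 + Y ^ 2) * x + K * (X * Y) = 0 → x ≤ X / Y := by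
  have hX : 0 < X := hY.trans_le hYX
  have hfactor (x : ℝ) : K * (X * Y) * x ^ 2 - K * (X ^ 2 + Y ^ 2) * x + K * (X * Y) =
      K * ((X * x - Y) * (Y * x - X)) := by
    ring
  simp only [hfactor, mul_eq_zero, hK, false_or, sub_eq_zero, inv_div]
  refine ⟨.inr (by field_simp), .inl (by field_simp), fun x hx => ?_⟩
  rcases hx with hx | hx
  · obtain rfl : x = Y / X := by rw [eq_div_iff hX.ne']; linarith
    rw [div_le_div_iff₀ hX hY]
    nlinarith
  · exact ((eq_div_iff hY.ne').2 (by linarith)).le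

theorem exp_hilbertDist_quadratic_general (a b : ℂ)
    (ha : ‖a‖ < 1) (hb : ‖b‖ < 1) (hab : a ≠ b) :
    (1 - ‖a‖ ^ 2) * (1 - ‖b‖ ^ 2) *
          Real.exp (hilbertDist a b) ^ 2 -
        (((1 - a * conj b) ^ 2 + (1 - conj a * b) ^ 2).re +
            2 * ‖a - b‖ ^ 2) * Real.exp (hilbertDist a b) +
        (1 - ‖a‖ ^ 2) * (1 - ‖b‖ ^ 2) = 0 ∧
    (1 - ‖a‖ ^ 2) * (1 - ‖b‖ ^ 2) *
          ((Real.exp (hilbertDist a b))⁻¹) ^ 2 -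
        (((1 - a * conj b) ^ 2 + (1 - conj a * b) ^ 2).re +
            2 * ‖a - b‖ ^ 2) * (Real.exp (hilbertDist a b))⁻¹ +
        (1 - ‖a‖ ^ 2) * (1 - ‖b‖ ^ 2) = 0 ∧
    ∀ x : ℝ,
      (1 - ‖a‖ ^ 2) * (1 - ‖b‖ ^ 2) * x ^ 2 -
          (((1 - a * conj b) ^ 2 + (1 - conj a * b) ^ 2).re +
              2 * ‖a - b‖ ^ 2) * x +
          (1 - ‖a‖ ^ 2) * (1 - ‖b‖ ^ 2) = 0 →
      x ≤ Real.exp (hilbertDist a b) := by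
  obtain ⟨t, t', ht, ht', hf⟩ := exists_norm_lineMap_sq_sub_one_eq ha hb hab
  have hfa : 1 - ‖a‖ ^ 2 = ‖b - a‖ ^ 2 * -(t * t') := by
    have h0 := hf 0
    rw [lineMap_apply_zero] at h0
    linear_combination -h0
  have hfb : 1 - ‖b‖ ^ 2 = ‖b - a‖ ^ 2 * -((1 - t) * (1 - t')) := by
    have h1 := hf 1
    rw [lineMap_apply_one] at h1
    linear_combination -h1
  have hprod : (1 - ‖a‖ ^ 2) * (1 - ‖b‖ ^ 2) =
      (‖b - a‖ ^ 2) ^ 2 * ((1 - t) * t' * (-t * (t' - 1))) := by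
    rw [hfa, hfb]; ring
  have hsum : 2 - ‖a‖ ^ 2 - ‖b‖ ^ 2 + ‖b - a‖ ^ 2 =
      ‖b - a‖ ^ 2 * ((1 - t) * t' + -t * (t' - 1)) := by
    linear_combination hfa + hfb
  have hcoeff : ((1 - a * conj b) ^ 2 + (1 - conj a * b) ^ 2).re + 2 * ‖a - b‖ ^ 2 =
      (‖b - a‖ ^ 2) ^ 2 * (((1 - t) * t') ^ 2 + (-t * (t' - 1)) ^ 2) := by
    rw [re_one_sub_mul_conj_sq_add_sq_add_two_norm_sub_sq, norm_sub_rev, hsum, hprod]; ring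
  have hY : 0 < -t * (t' - 1) := mul_pos (neg_pos.2 ht) (sub_pos.2 ht')
  have hK : (‖b - a‖ ^ 2) ^ 2 ≠ 0 := by have := sub_ne_zero.2 hab.symm; positivity
  rw [hilbertDist_eq_log hab ht ht' hf, Real.exp_log (div_pos (by nlinarith) hY), hprod, hcoeff]
  exact reciprocal_quadratic_roots hK hY (by nlinarith)

/-- `H = exp (h(a,b))` satisfies the quadratic equation
`(1-|a|²)(1-|b|²)H² - ((1-a·conj b)² + (1-conj a·b)² + 2|a-b|²)H + (1-|a|²)(1-|b|²) = 0`,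
its reciprocal `H⁻¹` is also a root, and `H` is the larger root. -/
theorem exp_hilbertDist_quadratic (a b : ℂ)
    (ha : ‖a‖ < 1) (hb : ‖b‖ < 1) (hab : a ≠ b)
    (u v : ℂ) (hu : ‖u‖ = 1) (hv : ‖v‖ = 1)
    (huL : u ∈ lineThrough a b) (hvL : v ∈ lineThrough a b)
    (hord : dist u a < dist u b) (huv : u ≠ v) :
    (1 - ‖a‖ ^ 2) * (1 - ‖b‖ ^ 2) *
          Real.exp (hilbertDist a b) ^ 2 -
        (((1 - a * conj b) ^ 2 + (1 - conj a * b) ^ 2).re +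
            2 * ‖a - b‖ ^ 2) * Real.exp (hilbertDist a b) +
        (1 - ‖a‖ ^ 2) * (1 - ‖b‖ ^ 2) = 0 ∧
    (1 - ‖a‖ ^ 2) * (1 - ‖b‖ ^ 2) *
          ((Real.exp (hilbertDist a b))⁻¹) ^ 2 -
        (((1 - a * conj b) ^ 2 + (1 - conj a * b) ^ 2).re +
            2 * ‖a - b‖ ^ 2) * (Real.exp (hilbertDist a b))⁻¹ +
        (1 - ‖a‖ ^ 2) * (1 - ‖b‖ ^ 2) = 0 ∧
    ∀ x : ℝ,
      (1 - ‖a‖ ^ 2) * (1 - ‖b‖ ^ 2) * x ^ 2 -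
          (((1 - a * conj b) ^ 2 + (1 - conj a * b) ^ 2).re +
              2 * ‖a - b‖ ^ 2) * x +
          (1 - ‖a‖ ^ 2) * (1 - ‖b‖ ^ 2) = 0 →
      x ≤ Real.exp (hilbertDist a b) :=
  exp_hilbertDist_quadratic_general a b ha hb hab
end
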